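/- arXiv:1908.02529 — 8 statements merged into one kernel-verified Lean document; each statement's English description precedes it below -/
import Mathlib

section
/- Let u : ℝ → ℝ be a Bohr almost periodic function (i.e., for every ε > 0 the set of ε-almost-periods of u is relatively dense in ℝ). If the sequences of translates (u_{τ_n})_{n∈ℕ} and (u_{s_n})_{n∈ℕ}, where u_τ(t) = u(t+τ), both converge uniformly on ℝ, then the sequence (u_{τ_n - s_n})_{n∈ℕ} also converges uniformly on ℝ. -/
open Filter Set

/-!
With `x = t - s m` and `y = x + τ n - s n` one has `u (t + (τ m - s m)) = u (x + τ m)`,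
`u (x + τ n) = u (y + s n)` and `u (t + (τ n - s n)) = u (y + s m)`. So the uniform distance
between the `m`-th and `n`-th translates by `τ - s` is at most the distance between the
translates by `τ` plus that between the translates by `s`: the translates by `τ - s` are
uniformly Cauchy, and completeness of `ℝ` provides their uniform limit.
-/

theorem UniformCauchySeqOn.exists_tendstoUniformly {ι α β : Type*} [UniformSpace β]
    [CompleteSpace β] {F : ι → α → β} {p : Filter ι} [p.NeBot]
    (hF : UniformCauchySeqOn F p univ) : ∃ f : α → β, TendstoUniformly F f p := by
  choose f hf using fun x => CompleteSpace.complete (hF.cauchy_map (mem_univ x))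
  exact ⟨f, tendstoUniformlyOn_univ.1 (hF.tendstoUniformlyOn_of_tendsto fun x _ => hf x)⟩

theorem uniformCauchySeqOn_comp_add_sub {ι G β : Type*} [AddCommGroup G] [UniformSpace β]
    {u : G → β} {τ σ : ι → G} {p : Filter ι}
    (hτ : UniformCauchySeqOn (fun n x => u (x + τ n)) p univ)
    (hσ : UniformCauchySeqOn (fun n x => u (x + σ n)) p univ) :
    UniformCauchySeqOn (fun n x => u (x + (τ n - σ n))) p univ := by
  intro V hV
  obtain ⟨W, hW, hWsymm, hWV⟩ := comp_symm_mem_uniformity_sets hV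
  filter_upwards [hτ W hW, hσ W hW] with ⟨m, n⟩ hτmn hσmn t _
  set x := t - σ m
  set y := x + τ n - σ n
  have hτ_step : (u (x + τ m), u (x + τ n)) ∈ W := hτmn x (mem_univ x)
  have hσ_step : (u (y + σ n), u (y + σ m)) ∈ W := hWsymm.symm _ _ (hσmn y (mem_univ y))
  have hx : t + (τ m - σ m) = x + τ m := by simp only [x]; abel
  have hxy : x + τ n = y + σ n := by simp only [y]; abel
  have hy : t + (τ n - σ n) = y + σ m := by simp only [x, y]; abel
  rw [← hxy] at hσ_step
  rw [hx, hy]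
  exact hWV (SetRel.prodMk_mem_comp hτ_step hσ_step)

theorem stmt_0_general (u : ℝ → ℝ)
    (τ s : ℕ → ℝ) (f g : ℝ → ℝ)
    (hf : TendstoUniformly (fun n t => u (t + τ n)) f atTop)
    (hg : TendstoUniformly (fun n t => u (t + s n)) g atTop) :
    ∃ h : ℝ → ℝ, TendstoUniformly (fun n t => u (t + (τ n - s n))) h atTop :=
  (uniformCauchySeqOn_comp_add_sub (tendstoUniformlyOn_univ.2 hf).uniformCauchySeqOn
    (tendstoUniformlyOn_univ.2 hg).uniformCauchySeqOn).exists_tendstoUniformly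

/-- If `u` is Bohr almost periodic and the translate sequences `u (· + τ n)` and
`u (· + s n)` converge uniformly on `ℝ`, then so does `u (· + (τ n - s n))`. -/
theorem stmt_0 (u : ℝ → ℝ) (hu : Continuous u)
    (hap : ∀ ε > 0, ∃ L > 0, ∀ x : ℝ, ∃ T ∈ Set.Icc x (x + L),
      ∀ t : ℝ, |u (t + T) - u t| < ε)
    (τ s : ℕ → ℝ) (f g : ℝ → ℝ)
    (hf : TendstoUniformly (fun n t => u (t + τ n)) f atTop)
    (hg : TendstoUniformly (fun n t => u (t + s n)) g atTop) :
    ∃ h : ℝ → ℝ, TendstoUniformly (fun n t => u (t + (τ n - s n))) h atTop :=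
  stmt_0_general u τ s f g hf hg
end

section
/- Let Ω be a compact metrizable commutative topological group, ψ : ℝ → Ω a continuous homomorphism with dense image, φ a nontrivial character of Ω with φ(ψ(t)) = e^{iαt}, Σ = ker φ, and S = 2π/|α|. Then the restricted flow Φ : Σ × [0,S) → Ω, Φ(σ,t) = σ + ψ(t), is a continuous bijection, and its restriction to Σ × (0,S) is a homeomorphism onto Ω \ Σ. -/
/-!
Along the orbit of `σ ∈ Σ` the character reads `φ (σ + ψ t) = exp (I α t)`, which is injective
on every interval of length `S = 2π/|α|`. Conversely, a branch of the argument of `φ ω` cut at `1`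
gives a time `τ ω ∈ (0, S)` with `exp (I α τ ω) = φ ω`, so `ω - ψ (τ ω) ∈ Σ`; since `τ` is
continuous off `Σ`, so is the inverse `ω ↦ (ω - ψ (τ ω), τ ω)`.
-/

open Complex Real Set
open scoped ComplexOrder

theorem eq_of_exp_I_mul_eq_of_abs_sub_lt {α s t : ℝ} (hst : |s - t| < 2 * π / |α|)
    (h : exp (I * α * s) = exp (I * α * t)) : s = t := by
  have hα : α ≠ 0 := by
    rintro rfl
    simp only [abs_zero, div_zero] at hst
    exact (abs_nonneg _).not_gt hst
  have hlt : |α * (s - t)| < 2 * π := by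
    rw [abs_mul, mul_comm]
    exact (lt_div_iff₀ (abs_pos.2 hα)).1 hst
  have hcos : Real.cos (α * (s - t)) = 1 := by
    have hsub : ((α * (s - t) : ℝ) : ℂ) * I = I * α * s - I * α * t := by push_cast; ring
    rw [exp_eq_exp_iff_exp_sub_eq_one] at h
    rw [← exp_ofReal_mul_I_re, hsub, h, one_re]
  have := (Real.cos_eq_one_iff_of_lt_of_lt (abs_lt.1 hlt).1 (abs_lt.1 hlt).2).1 hcos
  simpa [hα, sub_eq_zero] using this

theorem neg_mem_slitPlane_of_norm_eq_one {z : ℂ} (hz : ‖z‖ = 1) (h1 : z ≠ 1) :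
    -z ∈ slitPlane := by
  rw [mem_slitPlane_iff_not_le_zero, neg_nonpos]
  intro h0
  exact h1 (by rw [eq_coe_norm_of_nonneg h0, hz, ofReal_one])

/-- `arg (-z)` has its cut at `z = 1`; the shift by half a period `π / |α|` puts the time in
`(0, 2π/|α|)` whatever the sign of `α`. -/
noncomputable def circleTime (α : ℝ) (z : ℂ) : ℝ := π / |α| + arg (-z) / α

theorem circleTime_mem_Ioo {α : ℝ} (hα : α ≠ 0) {z : ℂ} (hz : ‖z‖ = 1) (h1 : z ≠ 1) :
    circleTime α z ∈ Ioo 0 (2 * π / |α|) := by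
  have harg : |arg (-z)| < π :=
    abs_lt.2 ⟨neg_pi_lt_arg _,
      (arg_le_pi _).lt_of_ne (slitPlane_arg_ne_pi (neg_mem_slitPlane_of_norm_eq_one hz h1))⟩
  have hquot : |arg (-z) / α| < π / |α| := by
    rw [abs_div]
    exact div_lt_div_of_pos_right harg (abs_pos.2 hα)
  have hS : 2 * π / |α| = 2 * (π / |α|) := mul_div_assoc _ _ _
  rw [circleTime, hS]
  constructor <;> linarith [abs_lt.1 hquot]

theorem exp_I_mul_circleTime {α : ℝ} (hα : α ≠ 0) {z : ℂ} (hz : ‖z‖ = 1) :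
    exp (I * α * circleTime α z) = z := by
  have hsplit : I * α * circleTime α z = (α / |α| * π : ℝ) * I + arg (-z) * I := by
    have hα' : (α : ℂ) ≠ 0 := ofReal_ne_zero.2 hα
    simp only [circleTime]
    push_cast
    field_simp
  have hhalf : exp ((α / |α| * π : ℝ) * I) = -1 := by
    rcases hα.lt_or_gt with hneg | hpos
    · rw [abs_of_neg hneg, div_neg, div_self hneg.ne]
      simp
    · rw [abs_of_pos hpos, div_self hpos.ne']
      simp
  have hopp : exp (arg (-z) * I) = -z := by
    simpa [hz] using norm_mul_exp_arg_mul_I (-z)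
  rw [hsplit, Complex.exp_add, hhalf, hopp, neg_one_mul, neg_neg]

theorem continuousAt_circleTime (α : ℝ) {z : ℂ} (hz : ‖z‖ = 1) (h1 : z ≠ 1) :
    ContinuousAt (circleTime α) z :=
  continuousAt_const.add <|
    ((continuousAt_arg (neg_mem_slitPlane_of_norm_eq_one hz h1)).comp continuousAt_neg).div_const _

section Flow

variable {Ω : Type*} [AddCommGroup Ω] {ψ : ℝ →+ Ω} {φ : Ω → ℂ} {α : ℝ}

def flow (ψ : ℝ →+ Ω) (p : Ω × ℝ) : Ω := p.1 + ψ p.2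

theorem map_flow_of_eq_one (hφhom : ∀ ω ω', φ (ω + ω') = φ ω * φ ω')
    (hexp : ∀ t : ℝ, φ (ψ t) = exp (I * α * t)) {σ : Ω} (hσ : φ σ = 1) (t : ℝ) :
    φ (flow ψ (σ, t)) = exp (I * α * t) := by
  rw [flow, hφhom, hσ, one_mul, hexp]

theorem flow_injOn (hφhom : ∀ ω ω', φ (ω + ω') = φ ω * φ ω')
    (hexp : ∀ t : ℝ, φ (ψ t) = exp (I * α * t)) :
    InjOn (flow ψ) ({ω | φ ω = 1} ×ˢ Ico 0 (2 * π / |α|)) := by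
  rintro ⟨σ, s⟩ ⟨hσ, hs⟩ ⟨σ', t⟩ ⟨hσ', ht⟩ h
  have hst : s = t := by
    refine eq_of_exp_I_mul_eq_of_abs_sub_lt (α := α) (abs_sub_lt_iff.2 ⟨?_, ?_⟩) ?_
    · linarith [hs.2, ht.1]
    · linarith [hs.1, ht.2]
    · rw [← map_flow_of_eq_one hφhom hexp hσ, ← map_flow_of_eq_one hφhom hexp hσ', h]
  subst hst
  simpa [flow] using h

theorem map_sub_circleTime (hα : α ≠ 0) (hφabs : ∀ ω, ‖φ ω‖ = 1)
    (hφhom : ∀ ω ω', φ (ω + ω') = φ ω * φ ω') (hexp : ∀ t : ℝ, φ (ψ t) = exp (I * α * t))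
    (ω : Ω) : φ (ω - ψ (circleTime α (φ ω))) = 1 := by
  have hsplit := hφhom (ω - ψ (circleTime α (φ ω))) (ψ (circleTime α (φ ω)))
  rw [sub_add_cancel, hexp, exp_I_mul_circleTime hα (hφabs ω)] at hsplit
  have hne : φ ω ≠ 0 := norm_ne_zero_iff.1 (by rw [hφabs]; exact one_ne_zero)
  exact (mul_eq_right₀ hne).1 hsplit.symm

theorem flow_surjOn (hα : α ≠ 0) (hφabs : ∀ ω, ‖φ ω‖ = 1)
    (hφhom : ∀ ω ω', φ (ω + ω') = φ ω * φ ω') (hexp : ∀ t : ℝ, φ (ψ t) = exp (I * α * t)) :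
    SurjOn (flow ψ) ({ω | φ ω = 1} ×ˢ Ico 0 (2 * π / |α|)) univ := by
  intro ω _
  by_cases hω : φ ω = 1
  · exact ⟨(ω, 0), ⟨hω, le_rfl, by positivity⟩, by simp [flow]⟩
  · have hτ := circleTime_mem_Ioo hα (hφabs ω) hω
    exact ⟨(ω - ψ (circleTime α (φ ω)), circleTime α (φ ω)),
      ⟨map_sub_circleTime hα hφabs hφhom hexp ω, hτ.1.le, hτ.2⟩, by simp [flow]⟩

theorem map_flow_ne_one (hφhom : ∀ ω ω', φ (ω + ω') = φ ω * φ ω')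
    (hexp : ∀ t : ℝ, φ (ψ t) = exp (I * α * t)) {σ : Ω} (hσ : φ σ = 1) {t : ℝ}
    (ht : t ∈ Ioo 0 (2 * π / |α|)) : φ (flow ψ (σ, t)) ≠ 1 := by
  intro h
  have h0 : t = 0 := by
    refine eq_of_exp_I_mul_eq_of_abs_sub_lt (α := α) ?_ ?_
    · rw [sub_zero, abs_of_pos ht.1]
      exact ht.2
    rw [← map_flow_of_eq_one hφhom hexp hσ, h, ofReal_zero, mul_zero, Complex.exp_zero]
  exact ht.1.ne' h0

theorem circleTime_map_flow (hα : α ≠ 0) (hφabs : ∀ ω, ‖φ ω‖ = 1)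
    (hφhom : ∀ ω ω', φ (ω + ω') = φ ω * φ ω') (hexp : ∀ t : ℝ, φ (ψ t) = exp (I * α * t))
    {σ : Ω} (hσ : φ σ = 1) {t : ℝ} (ht : t ∈ Ioo 0 (2 * π / |α|)) :
    circleTime α (φ (flow ψ (σ, t))) = t := by
  have hτ := circleTime_mem_Ioo hα (hφabs _) (map_flow_ne_one hφhom hexp hσ ht)
  refine eq_of_exp_I_mul_eq_of_abs_sub_lt (α := α) (abs_sub_lt_iff.2 ⟨?_, ?_⟩) ?_
  · linarith [hτ.2, ht.1]
  · linarith [hτ.1, ht.2]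
  · rw [exp_I_mul_circleTime hα (hφabs _), map_flow_of_eq_one hφhom hexp hσ]

theorem continuous_flow [TopologicalSpace Ω] [ContinuousAdd Ω] (hψ : Continuous ψ) :
    Continuous (flow ψ) :=
  continuous_fst.add (hψ.comp continuous_snd)

variable [TopologicalSpace Ω] [IsTopologicalAddGroup Ω]

noncomputable def flowHomeomorph (hψ : Continuous ψ) (hφc : Continuous φ) (hα : α ≠ 0)
    (hφabs : ∀ ω, ‖φ ω‖ = 1) (hφhom : ∀ ω ω', φ (ω + ω') = φ ω * φ ω')
    (hexp : ∀ t : ℝ, φ (ψ t) = exp (I * α * t)) :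
    ({ω | φ ω = 1} ×ˢ Ioo 0 (2 * π / |α|) : Set (Ω × ℝ)) ≃ₜ ({ω | φ ω = 1}ᶜ : Set Ω) where
  toFun q := ⟨flow ψ q, map_flow_ne_one hφhom hexp q.2.1 q.2.2⟩
  invFun w := ⟨((w : Ω) - ψ (circleTime α (φ w)), circleTime α (φ w)),
    map_sub_circleTime hα hφabs hφhom hexp w, circleTime_mem_Ioo hα (hφabs w) w.2⟩
  left_inv := by
    rintro ⟨⟨σ, t⟩, hσ, ht⟩
    simp only [circleTime_map_flow hα hφabs hφhom hexp hσ ht]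
    simp [flow]
  right_inv w := by simp [flow]
  continuous_toFun := ((continuous_flow hψ).comp continuous_subtype_val).subtype_mk _
  continuous_invFun := by
    have hτ : Continuous fun w : ({ω | φ ω = 1}ᶜ : Set Ω) => circleTime α (φ w) :=
      continuous_iff_continuousAt.2 fun w =>
        (continuousAt_circleTime α (hφabs w) w.2).comp
          (f := fun w : ({ω | φ ω = 1}ᶜ : Set Ω) => φ w) (hφc.comp continuous_subtype_val).continuousAt
    exact ((continuous_subtype_val.sub (hψ.comp hτ)).prodMk hτ).subtype_mk _

end Flow

theorem stmt_4_general {Ω : Type*} [AddCommGroup Ω] [TopologicalSpace Ω] [IsTopologicalAddGroup Ω]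
    (ψ : ℝ →+ Ω) (hψ : Continuous ψ)
    (φ : Ω → ℂ) (hφc : Continuous φ)
    (hφabs : ∀ ω : Ω, ‖φ ω‖ = 1)
    (hφhom : ∀ ω ω' : Ω, φ (ω + ω') = φ ω * φ ω')
    (α : ℝ) (hα : α ≠ 0)
    (hexp : ∀ t : ℝ, φ (ψ t) = Complex.exp (Complex.I * (α : ℂ) * (t : ℂ)))
    (S : ℝ) (hS : S = 2 * Real.pi / |α|)
    (Sig : Set Ω) (hSig : Sig = {ω : Ω | φ ω = 1}) :
    Continuous (fun p : Ω × ℝ => p.1 + ψ p.2) ∧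
    Set.BijOn (fun p : Ω × ℝ => p.1 + ψ p.2) (Sig ×ˢ Set.Ico 0 S) Set.univ ∧
    ∃ e : (Sig ×ˢ Set.Ioo 0 S : Set (Ω × ℝ)) ≃ₜ (Sigᶜ : Set Ω),
      ∀ q : (Sig ×ˢ Set.Ioo 0 S : Set (Ω × ℝ)),
        (e q : Ω) = (q : Ω × ℝ).1 + ψ (q : Ω × ℝ).2 := by
  subst hS hSig
  exact ⟨continuous_flow hψ,
    ⟨fun _ _ => mem_univ _, flow_injOn hφhom hexp, flow_surjOn hα hφabs hφhom hexp⟩,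
    flowHomeomorph hψ hφc hα hφabs hφhom hexp, fun _ => rfl⟩

/-- The restricted flow `Φ(σ,t) = σ + ψ t` is a continuous bijection from
`Σ × [0,S)` onto `Ω`, and restricts to a homeomorphism from `Σ × (0,S)`
onto `Ω \ Σ`, where `Σ = ker φ` and `S = 2π/|α|`. -/
theorem stmt_4 {Ω : Type*} [AddCommGroup Ω] [TopologicalSpace Ω] [IsTopologicalAddGroup Ω]
    [CompactSpace Ω] [TopologicalSpace.MetrizableSpace Ω]
    (ψ : ℝ →+ Ω) (hψ : Continuous ψ) (hd : DenseRange ψ)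
    (φ : Ω → ℂ) (hφc : Continuous φ)
    (hφabs : ∀ ω : Ω, ‖φ ω‖ = 1)
    (hφhom : ∀ ω ω' : Ω, φ (ω + ω') = φ ω * φ ω')
    (hφnt : ∃ ω : Ω, φ ω ≠ 1)
    (α : ℝ) (hα : α ≠ 0)
    (hexp : ∀ t : ℝ, φ (ψ t) = Complex.exp (Complex.I * (α : ℂ) * (t : ℂ)))
    (S : ℝ) (hS : S = 2 * Real.pi / |α|)
    (Sig : Set Ω) (hSig : Sig = {ω : Ω | φ ω = 1}) :
    Continuous (fun p : Ω × ℝ => p.1 + ψ p.2) ∧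
    Set.BijOn (fun p : Ω × ℝ => p.1 + ψ p.2) (Sig ×ˢ Set.Ico 0 S) Set.univ ∧
    ∃ e : (Sig ×ˢ Set.Ioo 0 S : Set (Ω × ℝ)) ≃ₜ (Sigᶜ : Set Ω),
      ∀ q : (Sig ×ˢ Set.Ioo 0 S : Set (Ω × ℝ)),
        (e q : Ω) = (q : Ω × ℝ).1 + ψ (q : Ω × ℝ).2 :=
  stmt_4_general ψ hψ φ hφc hφabs hφhom α hα hexp S hS Sig hSig
end

section
/- With Ω, ψ, φ, Σ = ker φ, S = 2π/|α| as above, the restricted flow Φ : Σ × [0,S) → Ω, Φ(σ,t) = σ + ψ(t), is an isomorphism of measure spaces: for every Borel set B ⊂ Ω one has μ_Ω(B) = (1/S)·(μ_Σ ⊗ λ)(Φ⁻¹(B)), where μ_Ω and μ_Σ are the Haar probability measures of Ω and Σ and λ is Lebesgue measure on [0,S). -/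
/-!
Let `ν` be the push-forward of `μ_Σ ⊗ λ|[0,S)` along `Φ (σ, t) = σ + ψ t`. Since `φ ∘ ψ` winds
around the circle, every `ω` splits as `σ + ψ t` with `σ ∈ Σ`, and `ψ S ∈ Σ`. Translating `ν` by
`σ + ψ t` therefore only translates the `μ_Σ`-factor inside `Σ` and shifts time by `t`, which
leaves the integral of the `S`-periodic slice function `t ↦ μ_Σ(B - ψ t)` over a period unchanged.
So `ν` is a finite translation-invariant measure of mass `S`, and uniqueness of invariant measures
gives `ν = S • μ_Ω`.
-/
open MeasureTheory
open scoped ENNReal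

theorem Function.Periodic.setLIntegral_Ico_add_eq {f : ℝ → ℝ≥0∞} {T : ℝ}
    (hf : Function.Periodic f T) (hT : 0 < T) (s : ℝ) :
    ∫⁻ t in Set.Ico 0 T, f (t + s) = ∫⁻ t in Set.Ico 0 T, f t := by
  have : VAddInvariantMeasure (AddSubgroup.zmultiples T) ℝ volume :=
    ⟨fun _ _ _ => measure_preimage_add _ _ _⟩
  have hIoc : Set.Ico (0 : ℝ) T =ᵐ[volume] Set.Ioc 0 T := Ico_ae_eq_Ioc
  rw [Measure.restrict_congr_set hIoc,
    (measurePreserving_add_right volume s).setLIntegral_comp_emb (measurableEmbedding_addRight s),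
    Set.image_add_const_Ioc, zero_add, add_comm T s]
  have := (isAddFundamentalDomain_Ioc hT s).setLIntegral_eq (isAddFundamentalDomain_Ioc hT 0) f
    hf.map_vadd_zmultiples
  rwa [zero_add] at this

theorem isAddLeftInvariant_of_measure_preimage_add_right {G : Type*} [AddCommGroup G]
    [MeasurableSpace G] [MeasurableAdd G] {μ : Measure G}
    (h : ∀ s, MeasurableSet s → ∀ g : G, μ ((· + g) ⁻¹' s) = μ s) : μ.IsAddLeftInvariant :=
  ⟨fun g => Measure.ext fun s hs => by
    rw [Measure.map_apply (measurable_const_add g) hs]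
    simpa only [add_comm g] using h s hs g⟩

section FlowMeasure

variable {G : Type*} [AddCommGroup G] [MeasurableSpace G]

noncomputable def flowMeasure (μ : Measure G) (ψ : ℝ → G) (T : ℝ) : Measure G :=
  (μ.prod (volume.restrict (Set.Ico 0 T))).map fun p => p.1 + ψ p.2

variable [MeasurableAdd₂ G] {ψ : ℝ →+ G} {μ : Measure G}

theorem measurable_flow (hψ : Measurable ψ) : Measurable fun p : G × ℝ => p.1 + ψ p.2 :=
  measurable_fst.add (hψ.comp measurable_snd)

theorem flowMeasure_apply [SFinite μ] (hψ : Measurable ψ) (T : ℝ) {C : Set G}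
    (hC : MeasurableSet C) :
    flowMeasure μ ψ T C = ∫⁻ t in Set.Ico 0 T, μ ((· + ψ t) ⁻¹' C) := by
  have hΦ := measurable_flow hψ
  rw [flowMeasure, Measure.map_apply hΦ hC, Measure.prod_apply_symm (hΦ hC)]
  rfl

theorem flowMeasure_univ [SFinite μ] (hψ : Measurable ψ) (T : ℝ) :
    flowMeasure μ ψ T Set.univ = μ Set.univ * ENNReal.ofReal T := by
  rw [flowMeasure_apply hψ T MeasurableSet.univ]
  simp [mul_comm]

instance [IsFiniteMeasure μ] (ψ : ℝ → G) (T : ℝ) : IsFiniteMeasure (flowMeasure μ ψ T) := by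
  rw [flowMeasure]
  infer_instance

theorem flowMeasure_isAddLeftInvariant [SFinite μ] (hψ : Measurable ψ) {H : Set G}
    (hμ : ∀ s, MeasurableSet s → ∀ σ ∈ H, μ ((· + σ) ⁻¹' s) = μ s)
    {T : ℝ} (hT : 0 < T) (hψT : ψ T ∈ H) (hcover : ∀ g : G, ∃ σ ∈ H, ∃ t, σ + ψ t = g) :
    (flowMeasure μ ψ T).IsAddLeftInvariant := by
  refine isAddLeftInvariant_of_measure_preimage_add_right fun C hC g => ?_
  obtain ⟨σ, hσ, t₀, rfl⟩ := hcover g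
  set f : ℝ → ℝ≥0∞ := fun t => μ ((· + ψ t) ⁻¹' C)
  have hf : Function.Periodic f T := fun t => by
    simpa only [f, ← Set.preimage_comp, Function.comp_def, map_add, add_assoc, add_comm (ψ T)]
      using hμ _ (measurable_add_const _ hC) _ hψT
  have hshift : ∀ t, μ ((· + ψ t) ⁻¹' ((· + (σ + ψ t₀)) ⁻¹' C)) = f (t + t₀) := fun t => by
    simpa only [f, ← Set.preimage_comp, Function.comp_def, map_add, add_assoc, add_comm (ψ t),
      add_left_comm (ψ t)] using hμ _ (measurable_add_const _ hC) _ hσ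
  rw [flowMeasure_apply hψ T (measurable_add_const _ hC), flowMeasure_apply hψ T hC]
  simp_rw [hshift]
  exact hf.setLIntegral_Ico_add_eq hT t₀

theorem flowMeasure_eq_prod_setOf [SFinite μ] (hψ : Measurable ψ) {H : Set G}
    (hH : μ Hᶜ = 0) (T : ℝ) {B : Set G} (hB : MeasurableSet B) :
    flowMeasure μ ψ T B =
      (μ.prod volume) {p : G × ℝ | p.1 ∈ H ∧ p.2 ∈ Set.Ico 0 T ∧ p.1 + ψ p.2 ∈ B} := by
  have hΦ := measurable_flow hψ
  have hset : {p : G × ℝ | p.1 ∈ H ∧ p.2 ∈ Set.Ico 0 T ∧ p.1 + ψ p.2 ∈ B}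
      = (fun p : G × ℝ => p.1 + ψ p.2) ⁻¹' B ∩ H ×ˢ Set.Ico 0 T := by
    ext p
    simp only [Set.mem_ofPred_eq, Set.mem_inter_iff, Set.mem_preimage, Set.mem_prod]
    tauto
  rw [hset, ← Measure.restrict_apply (hΦ hB), ← Measure.prod_restrict,
    Measure.restrict_eq_self_of_ae_mem (show ∀ᵐ x ∂μ, x ∈ H from mem_ae_iff.mpr hH), flowMeasure,
    Measure.map_apply hΦ hB]

end FlowMeasure

theorem Complex.exp_I_mul_mul_two_pi_div_abs {α : ℝ} (hα : α ≠ 0) :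
    Complex.exp (Complex.I * α * ↑(2 * Real.pi / |α|)) = 1 := by
  have hα' : (α : ℂ) ≠ 0 := Complex.ofReal_ne_zero.mpr hα
  rw [Complex.exp_eq_one_iff]
  rcases abs_cases α with ⟨h, -⟩ | ⟨h, -⟩
  · exact ⟨1, by rw [h]; push_cast; field_simp⟩
  · exact ⟨-1, by rw [h]; push_cast; field_simp⟩

theorem AddChar.exists_eq_one_add_eq {G : Type*} [AddCommGroup G] (χ : AddChar G ℂ)
    (hχ : ∀ g, ‖χ g‖ = 1) {ψ : ℝ →+ G} {α : ℝ} (hα : α ≠ 0)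
    (hχψ : ∀ t, χ (ψ t) = Complex.exp (Complex.I * α * t)) (g : G) :
    ∃ σ, χ σ = 1 ∧ ∃ t, σ + ψ t = g := by
  have hα' : (α : ℂ) ≠ 0 := Complex.ofReal_ne_zero.mpr hα
  set t := Complex.arg (χ g) / α
  have ht : χ (ψ t) = χ g := by
    rw [hχψ, ← Complex.norm_mul_exp_arg_mul_I (χ g), hχ, Complex.ofReal_one, one_mul]
    congr 1
    push_cast [t]
    field_simp
  refine ⟨g - ψ t, ?_, t, sub_add_cancel g _⟩
  rw [χ.map_sub_eq_div, ht, div_self]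
  exact fun h => by simpa [h] using hχ g

theorem stmt_5_general {Ω : Type*} [AddCommGroup Ω] [TopologicalSpace Ω] [IsTopologicalAddGroup Ω]
    [CompactSpace Ω] [TopologicalSpace.MetrizableSpace Ω]
    [MeasurableSpace Ω] [BorelSpace Ω]
    (ψ : ℝ →+ Ω) (hψ : Continuous ψ)
    (φ : Ω → ℂ)
    (hφabs : ∀ ω : Ω, ‖φ ω‖ = 1)
    (hφhom : ∀ ω ω' : Ω, φ (ω + ω') = φ ω * φ ω')
    (α : ℝ) (hα : α ≠ 0)
    (hexp : ∀ t : ℝ, φ (ψ t) = Complex.exp (Complex.I * (α : ℂ) * (t : ℂ)))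
    (S : ℝ) (hS : S = 2 * Real.pi / |α|)
    (Sig : Set Ω) (hSig : Sig = {ω : Ω | φ ω = 1})
    (μΩ : Measure Ω) [IsProbabilityMeasure μΩ]
    (hμΩinv : ∀ s : Set Ω, MeasurableSet s → ∀ ω : Ω, μΩ ((fun x => x + ω) ⁻¹' s) = μΩ s)
    (μSig : Measure Ω) [IsProbabilityMeasure μSig]
    (hμSigsupp : μSig Sigᶜ = 0)
    (hμSiginv : ∀ s : Set Ω, MeasurableSet s → ∀ σ ∈ Sig,
      μSig ((fun x => x + σ) ⁻¹' s) = μSig s) :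
    ∀ B : Set Ω, MeasurableSet B →
      μΩ B = (μSig.prod volume)
          {p : Ω × ℝ | p.1 ∈ Sig ∧ p.2 ∈ Set.Ico 0 S ∧ p.1 + ψ p.2 ∈ B}
        / ENNReal.ofReal S := by
  have : SecondCountableTopology Ω := by
    let _ := TopologicalSpace.metrizableSpaceMetric Ω
    infer_instance
  have hS_pos : 0 < S := hS ▸ div_pos Real.two_pi_pos (abs_pos.mpr hα)
  let χ : AddChar Ω ℂ :=
    { toFun := φ
      map_zero_eq_one' := by
        have h0 : φ 0 ≠ 0 := fun h => by simpa [h] using hφabs 0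
        simpa [h0] using (hφhom 0 0).symm
      map_add_eq_mul' := hφhom }
  have hψS : ψ S ∈ Sig := by
    rw [hSig, Set.mem_ofPred_eq, hexp, hS]
    exact Complex.exp_I_mul_mul_two_pi_div_abs hα
  have hcover (ω : Ω) : ∃ σ ∈ Sig, ∃ t, σ + ψ t = ω :=
    hSig ▸ χ.exists_eq_one_add_eq hφabs hα hexp ω
  have := isAddLeftInvariant_of_measure_preimage_add_right hμΩinv
  have := flowMeasure_isAddLeftInvariant hψ.measurable hμSiginv hS_pos hψS hcover
  intro B hB
  have hν_univ : flowMeasure μSig ψ S Set.univ = ENNReal.ofReal S := by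
    rw [flowMeasure_univ hψ.measurable, measure_univ, one_mul]
  have hS_ne_zero : ENNReal.ofReal S ≠ 0 := (ENNReal.ofReal_pos.mpr hS_pos).ne'
  have hunique := measure_add_measure_eq μΩ (flowMeasure μSig ψ S) Set.univ B
    (hν_univ ▸ hS_ne_zero) (hν_univ ▸ ENNReal.ofReal_ne_top)
  rw [hν_univ, measure_univ, one_mul] at hunique
  rw [← flowMeasure_eq_prod_setOf hψ.measurable hμSigsupp S hB,
    ENNReal.eq_div_iff hS_ne_zero ENNReal.ofReal_ne_top, hunique]

/-- Decomposition of the Haar measure along the flow: for every Borel set `B ⊆ Ω`,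
`μ_Ω(B) = (1/S)·(μ_Σ ⊗ λ)(Φ⁻¹(B))`, where `Φ(σ,t) = σ + ψ t` on `Σ × [0,S)`. -/
theorem stmt_5 {Ω : Type*} [AddCommGroup Ω] [TopologicalSpace Ω] [IsTopologicalAddGroup Ω]
    [CompactSpace Ω] [TopologicalSpace.MetrizableSpace Ω]
    [MeasurableSpace Ω] [BorelSpace Ω]
    (ψ : ℝ →+ Ω) (hψ : Continuous ψ) (hd : DenseRange ψ)
    (φ : Ω → ℂ) (hφc : Continuous φ)
    (hφabs : ∀ ω : Ω, ‖φ ω‖ = 1)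
    (hφhom : ∀ ω ω' : Ω, φ (ω + ω') = φ ω * φ ω')
    (hφnt : ∃ ω : Ω, φ ω ≠ 1)
    (α : ℝ) (hα : α ≠ 0)
    (hexp : ∀ t : ℝ, φ (ψ t) = Complex.exp (Complex.I * (α : ℂ) * (t : ℂ)))
    (S : ℝ) (hS : S = 2 * Real.pi / |α|)
    (Sig : Set Ω) (hSig : Sig = {ω : Ω | φ ω = 1})
    (μΩ : Measure Ω) [IsProbabilityMeasure μΩ]
    (hμΩinv : ∀ s : Set Ω, MeasurableSet s → ∀ ω : Ω, μΩ ((fun x => x + ω) ⁻¹' s) = μΩ s)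
    (μSig : Measure Ω) [IsProbabilityMeasure μSig]
    (hμSigsupp : μSig Sigᶜ = 0)
    (hμSiginv : ∀ s : Set Ω, MeasurableSet s → ∀ σ ∈ Sig,
      μSig ((fun x => x + σ) ⁻¹' s) = μSig s) :
    ∀ B : Set Ω, MeasurableSet B →
      μΩ B = (μSig.prod volume)
          {p : Ω × ℝ | p.1 ∈ Sig ∧ p.2 ∈ Set.Ico 0 S ∧ p.1 + ψ p.2 ∈ B}
        / ENNReal.ofReal S :=
  stmt_5_general ψ hψ φ hφabs hφhom α hα hexp S hS Sig hSig μΩ hμΩinv μSig hμSigsupp hμSiginv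
end

section
/- (Refined Poincaré recurrence, Dolgopyat) Let (X, F, μ) be a measure space and T : X → X an injective map such that: (a) T(B), T⁻¹(B) ∈ F for every B ∈ F; (b) μ(T(B)) = μ(B) for every B ∈ F; (c) there is a set A ∈ F with μ(A) < ∞ such that almost every point of X visits A in the future (i.e., for a.e. x there is k ≥ 1 with T^k(x) ∈ A). Then for every measurable set B ⊂ X, almost all points of B return to B infinitely many times in the future. -/
/-!
A measure-preserving injective map is conservative as soon as almost every point visits a set `A`
of finite measure in the future; the classical Poincaré recurrence argument for conservative maps
then applies. To see conservativity, let `S` be a measurable set none of whose points ever returns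
to `S`. The forward images of `S` are pairwise disjoint, so the sets `T^k (S ∩ T^{-k} A)` are
disjoint subsets of `A` and `∑ₖ μ (S ∩ T^{-k} A) ≤ μ A < ∞`. By Borel–Cantelli almost every point
of `S` visits `A` only finitely often, whereas almost every point visits `A` infinitely often:
`T` is non-singular, so almost every forward orbit stays in the full-measure set of points whose
orbit meets `A`.
Hence `μ S = 0`.
-/

open MeasureTheory Filter Set Function

theorem MeasurableEmbedding.iterate {X : Type*} [MeasurableSpace X] {T : X → X}
    (hT : MeasurableEmbedding T) (n : ℕ) : MeasurableEmbedding T^[n] := by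
  induction n with
  | zero => exact MeasurableEmbedding.id
  | succ n ih => exact ih.comp hT

theorem Function.Injective.pairwise_disjoint_image_iterate {X : Type*} {T : X → X}
    (hinj : Injective T) {S : Set X} (hS : ∀ x ∈ S, ∀ m ≠ 0, T^[m] x ∉ S) :
    Pairwise (Disjoint on fun k => T^[k] '' S) := by
  suffices ∀ i j, i < j → Disjoint (T^[i] '' S) (T^[j] '' S) from
    fun i j hij => hij.lt_or_gt.elim (this i j) fun h => (this j i h).symm
  intro i j hij
  rw [disjoint_left]
  rintro _ ⟨x, hx, rfl⟩ ⟨y, hy, hyx⟩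
  have hxy : T^[j - i] y = x := by
    apply hinj.iterate i
    rw [← iterate_add_apply, Nat.add_sub_cancel' hij.le, hyx]
  exact hS y hy (j - i) (Nat.sub_ne_zero_of_lt hij) (hxy ▸ hx)

namespace MeasureTheory

variable {X : Type*} [MeasurableSpace X] {μ : Measure X} {T : X → X}

theorem measure_image_iterate_eq (hT : MeasurableEmbedding T)
    (hpres : ∀ s, MeasurableSet s → μ (T '' s) = μ s) (n : ℕ) {s : Set X}
    (hs : MeasurableSet s) : μ (T^[n] '' s) = μ s := by
  induction n with
  | zero => rw [iterate_zero, image_id]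
  | succ n ih =>
    rw [iterate_succ', image_comp, hpres _ ((hT.iterate n).measurableSet_image' hs), ih]

theorem quasiMeasurePreserving_of_measure_image_eq (hT : MeasurableEmbedding T)
    (hpres : ∀ s, MeasurableSet s → μ (T '' s) = μ s) :
    Measure.QuasiMeasurePreserving T μ μ := by
  refine ⟨hT.measurable, Measure.AbsolutelyContinuous.mk fun s hs hs0 => ?_⟩
  rw [Measure.map_apply hT.measurable hs, ← hpres _ (hT.measurable hs)]
  exact measure_mono_null (image_preimage_subset T s) hs0

theorem tsum_measure_inter_preimage_iterate_le (hT : MeasurableEmbedding T)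
    (hpres : ∀ s, MeasurableSet s → μ (T '' s) = μ s) {A S : Set X} (hA : MeasurableSet A)
    (hSm : MeasurableSet S) (hS : ∀ x ∈ S, ∀ m ≠ 0, T^[m] x ∉ S) :
    ∑' k, μ (S ∩ T^[k] ⁻¹' A) ≤ μ A := by
  have hE : ∀ k, MeasurableSet (S ∩ T^[k] ⁻¹' A) := fun k =>
    hSm.inter ((hT.iterate k).measurable hA)
  have hdisj : Pairwise (Disjoint on fun k => T^[k] '' (S ∩ T^[k] ⁻¹' A)) :=
    fun i j hij => (hT.injective.pairwise_disjoint_image_iterate hS hij).mono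
      (image_mono inter_subset_left) (image_mono inter_subset_left)
  calc ∑' k, μ (S ∩ T^[k] ⁻¹' A)
      = ∑' k, μ (T^[k] '' (S ∩ T^[k] ⁻¹' A)) :=
        tsum_congr fun k => (measure_image_iterate_eq hT hpres k (hE k)).symm
    _ = μ (⋃ k, T^[k] '' (S ∩ T^[k] ⁻¹' A)) :=
        (measure_iUnion hdisj fun k => (hT.iterate k).measurableSet_image' (hE k)).symm
    _ ≤ μ A := measure_mono <| iUnion_subset fun _ => image_subset_iff.2 inter_subset_right

theorem ae_frequently_iterate_mem_of_ae_exists (hT : Measure.QuasiMeasurePreserving T μ μ)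
    {A : Set X} (hvisit : ∀ᵐ x ∂μ, ∃ k, T^[k] x ∈ A) :
    ∀ᵐ x ∂μ, ∃ᶠ n in atTop, T^[n] x ∈ A := by
  have horbit : ∀ᵐ x ∂μ, ∀ N, ∃ k, T^[k] (T^[N] x) ∈ A :=
    ae_all_iff.2 fun N => (hT.iterate N).ae hvisit
  filter_upwards [horbit] with x hx
  refine frequently_atTop.2 fun N => ?_
  obtain ⟨k, hk⟩ := hx N
  exact ⟨k + N, le_add_self, by rwa [iterate_add_apply]⟩

theorem measure_eq_zero_of_forall_iterate_notMem (hT : MeasurableEmbedding T)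
    (hpres : ∀ s, MeasurableSet s → μ (T '' s) = μ s) {A : Set X} (hA : MeasurableSet A)
    (hAfin : μ A < ⊤) (hvisit : ∀ᵐ x ∂μ, ∃ k, T^[k] x ∈ A) {S : Set X}
    (hSm : MeasurableSet S) (hS : ∀ x ∈ S, ∀ m ≠ 0, T^[m] x ∉ S) : μ S = 0 := by
  have hfinite : ∀ᵐ x ∂μ, ∀ᶠ n in atTop, x ∉ S ∩ T^[n] ⁻¹' A :=
    ae_eventually_notMem ((tsum_measure_inter_preimage_iterate_le hT hpres hA hSm hS).trans_lt
      hAfin).ne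
  have hinfinite := ae_frequently_iterate_mem_of_ae_exists
    (quasiMeasurePreserving_of_measure_image_eq hT hpres) hvisit
  refine measure_eq_zero_iff_ae_notMem.2 ?_
  filter_upwards [hfinite, hinfinite] with x hfin hinf hxS
  obtain ⟨n, hnA, hn⟩ := (hinf.and_eventually hfin).exists
  exact hn ⟨hxS, hnA⟩

theorem conservative_of_ae_exists_iterate_mem (hT : MeasurableEmbedding T)
    (hpres : ∀ s, MeasurableSet s → μ (T '' s) = μ s) {A : Set X} (hA : MeasurableSet A)
    (hAfin : μ A < ⊤) (hvisit : ∀ᵐ x ∂μ, ∃ k, T^[k] x ∈ A) : Conservative T μ where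
  toQuasiMeasurePreserving := quasiMeasurePreserving_of_measure_image_eq hT hpres
  exists_mem_iterate_mem' S hSm hS0 := by
    by_contra! hS
    exact hS0 (measure_eq_zero_of_forall_iterate_notMem hT hpres hA hAfin hvisit hSm hS)

end MeasureTheory

/-- Refined Poincaré recurrence theorem (Dolgopyat): if `T` is injective,
bi-measurable and measure-preserving on a (possibly infinite) measure space, and
almost every point visits a set `A` of finite measure in the future, then for
every measurable `B`, almost all points of `B` return to `B` infinitely often. -/
theorem stmt_9 {X : Type*} [MeasurableSpace X] (μ : Measure X) (T : X → X)
    (hinj : Function.Injective T)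
    (hmeas : ∀ B : Set X, MeasurableSet B → MeasurableSet (T '' B) ∧ MeasurableSet (T ⁻¹' B))
    (hpres : ∀ B : Set X, MeasurableSet B → μ (T '' B) = μ B)
    (A : Set X) (hA : MeasurableSet A) (hAfin : μ A < ⊤)
    (hvisit : ∀ᵐ x ∂μ, ∃ k : ℕ, 1 ≤ k ∧ T^[k] x ∈ A) :
    ∀ B : Set X, MeasurableSet B →
      μ {x ∈ B | ¬ ∀ N : ℕ, ∃ k : ℕ, N ≤ k ∧ 1 ≤ k ∧ T^[k] x ∈ B} = 0 := by
  intro B hB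
  have hT : MeasurableEmbedding T :=
    ⟨hinj, fun s hs => (hmeas s hs).2, fun s hs => (hmeas s hs).1⟩
  have hvisit' : ∀ᵐ x ∂μ, ∃ k, T^[k] x ∈ A := hvisit.mono fun _ ⟨k, _, hk⟩ => ⟨k, hk⟩
  have hrec := (conservative_of_ae_exists_iterate_mem hT hpres hA hAfin hvisit'
    ).ae_mem_imp_frequently_image_mem hB.nullMeasurableSet
  refine measure_eq_zero_iff_ae_notMem.2 ?_
  filter_upwards [hrec] with x hx ⟨hxB, hnot⟩
  refine hnot fun N => ?_
  obtain ⟨k, hk, hkB⟩ := frequently_atTop.1 (hx hxB) (N + 1)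
  exact ⟨k, by omega, by omega, hkB⟩
end

section
/- (Finite-measure absorbing set) Let f : D ⊂ Ω × (0,∞) → Ω × (0,∞) be a measure-preserving embedding (continuous, injective, preserving μ_Ω ⊗ λ) and W : Ω × (0,∞) → ℝ continuous with 0 < β ≤ ∂_r W(ω,r) ≤ δ for all (ω,r), and W(f(ω,r)) ≤ W(ω,r) + k(r) on D for some decreasing bounded k with lim_{r→∞} k(r) = 0. Let (ε_j), (W_j) be positive sequences with Σ ε_j < ∞, W_j → ∞, and ε_j⁻¹ k(W_j/(4δ)) → 0. Define A = ⋃_j A_j where A_j = {(ω,r) : |W(ω,r) − W_j| ≤ ε_j}. Then (μ_Ω ⊗ λ)(A) < ∞, and every forward orbit (ω_n, r_n) = fⁿ(ω_0, r_0) with limsup_n r_n = ∞ enters A: there exists K ∈ ℕ with (ω_K, r_K) ∈ A. -/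
/-!
Since `β ≤ ∂ᵣW ≤ δ`, each slice `{r | |W(ω, r) - W_j| ≤ ε_j}` has diameter at most `2 ε_j / β`,
so `A_j` has measure at most `2 ε_j / β` and `Σ ε_j < ∞` makes `A` of finite measure.
For the orbit, compactness of `Ω` gives `β r - C ≤ W ≤ δ r + C`, so `W(x_n)` is unbounded.
For large `j`, let `m + 1` be the first time `W(x_n)` exceeds `W_j - ε_j`. One step raises `W` by
at most `sup k`, so `δ r_m ≳ W_j` and `r_m ≥ W_j / (4δ)`; hence the step raises `W` by at most
`k(W_j / (4δ)) < 2 ε_j`, and `x_{m+1}` lands in `A_j`.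
-/

open MeasureTheory Filter Set

theorem mul_sub_le_sub_le_mul_sub_of_hasDerivAt {g g' : ℝ → ℝ} {a β δ x y : ℝ}
    (hg : ∀ r, a < r → HasDerivAt g (g' r) r) (hg' : ∀ r, a < r → β ≤ g' r ∧ g' r ≤ δ)
    (hx : a < x) (hxy : x ≤ y) : β * (y - x) ≤ g y - g x ∧ g y - g x ≤ δ * (y - x) := by
  have hcont : ContinuousOn g (Ioi a) := fun r hr => (hg r hr).continuousAt.continuousWithinAt
  have hdiff : DifferentiableOn ℝ g (interior (Ioi a)) := by
    rw [interior_Ioi]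
    exact fun r hr => (hg r hr).differentiableAt.differentiableWithinAt
  have hderiv : ∀ r ∈ interior (Ioi a), β ≤ deriv g r ∧ deriv g r ≤ δ := by
    rw [interior_Ioi]
    intro r hr
    rw [(hg r hr).deriv]
    exact hg' r hr
  have hy : a < y := hx.trans_le hxy
  exact ⟨(convex_Ioi a).mul_sub_le_image_sub_of_le_deriv hcont hdiff
      (fun r hr => (hderiv r hr).1) x hx y hy hxy,
    (convex_Ioi a).image_sub_le_mul_sub_of_deriv_le hcont hdiff
      (fun r hr => (hderiv r hr).2) x hx y hy hxy⟩

theorem volume_setOf_abs_sub_le_le {g : ℝ → ℝ} {S : Set ℝ} {β c ε : ℝ} (hβ : 0 < β)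
    (hg : ∀ x ∈ S, ∀ y ∈ S, x ≤ y → β * (y - x) ≤ g y - g x) :
    volume {r | r ∈ S ∧ |g r - c| ≤ ε} ≤ ENNReal.ofReal (2 * ε / β) := by
  set T := {r | r ∈ S ∧ |g r - c| ≤ ε}
  have hspread : ∀ x ∈ T, ∀ y ∈ T, x ≤ y → y - x ≤ 2 * ε / β := by
    intro x hx y hy hxy
    rw [le_div_iff₀' hβ]
    linarith [hg x hx.1 y hy.1 hxy, abs_le.1 hx.2, abs_le.1 hy.2]
  refine (Real.volume_le_diam T).trans (Metric.ediam_le fun x hx y hy => ?_)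
  rw [edist_dist, Real.dist_eq]
  refine ENNReal.ofReal_le_ofReal ?_
  rcases le_total x y with hxy | hyx
  · rw [abs_sub_comm, abs_of_nonneg (sub_nonneg.2 hxy)]
    exact hspread x hx y hy hxy
  · rw [abs_of_nonneg (sub_nonneg.2 hyx)]
    exact hspread y hy x hx hyx

theorem ContinuousOn.measurableSet_inter_preimage {α β : Type*} [TopologicalSpace α]
    [MeasurableSpace α] [OpensMeasurableSpace α] [TopologicalSpace β] {g : α → β}
    {s : Set α} {t : Set β} (hg : ContinuousOn g s) (hs : IsOpen s) (ht : IsClosed t) :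
    MeasurableSet (s ∩ g ⁻¹' t) := by
  have hcompl : s ∩ g ⁻¹' t = s \ (s ∩ g ⁻¹' tᶜ) := by
    ext p
    simp
  rw [hcompl]
  exact hs.measurableSet.diff (hg.isOpen_inter_preimage hs ht.isOpen_compl).measurableSet

theorem MeasureTheory.Measure.prod_le_of_forall_measure_preimage_mk_le {α β : Type*}
    [MeasurableSpace α] [MeasurableSpace β] {μ : Measure α} [IsProbabilityMeasure μ] {ν : Measure β}
    {s : Set (α × β)} (hs : MeasurableSet s) {c : ENNReal}
    (h : ∀ x, ν (Prod.mk x ⁻¹' s) ≤ c) : μ.prod ν s ≤ c :=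
  calc μ.prod ν s ≤ ∫⁻ x, ν (Prod.mk x ⁻¹' s) ∂μ := Measure.prod_apply_le hs
    _ ≤ ∫⁻ _, c ∂μ := lintegral_mono h
    _ = c := by simp

def band {Ω : Type*} (W : Ω × ℝ → ℝ) (c ε : ℝ) : Set (Ω × ℝ) :=
  {p | 0 < p.2 ∧ |W p - c| ≤ ε}

section Band

variable {Ω : Type*} [TopologicalSpace Ω] {W W' : Ω × ℝ → ℝ} {β δ : ℝ}

theorem measurableSet_band [MeasurableSpace Ω] [OpensMeasurableSpace Ω]
    (hWc : ContinuousOn W (univ ×ˢ Ioi (0 : ℝ))) (c ε : ℝ) : MeasurableSet (band W c ε) := by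
  have h := hWc.measurableSet_inter_preimage (isOpen_univ.prod isOpen_Ioi)
    (Metric.isClosed_closedBall (x := c) (ε := ε))
  convert h using 1
  ext p
  simp [band, Real.dist_eq]

theorem measure_band_le [MeasurableSpace Ω] [OpensMeasurableSpace Ω] (μ : Measure Ω)
    [IsProbabilityMeasure μ] (hWc : ContinuousOn W (univ ×ˢ Ioi (0 : ℝ)))
    (hW' : ∀ (ω : Ω) (r : ℝ), 0 < r → HasDerivAt (fun s => W (ω, s)) (W' (ω, r)) r)
    (hWbound : ∀ (ω : Ω) (r : ℝ), 0 < r → β ≤ W' (ω, r) ∧ W' (ω, r) ≤ δ) (hβ : 0 < β)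
    (c ε : ℝ) : μ.prod volume (band W c ε) ≤ ENNReal.ofReal (2 * ε / β) :=
  Measure.prod_le_of_forall_measure_preimage_mk_le (measurableSet_band hWc c ε) fun ω =>
    volume_setOf_abs_sub_le_le (S := Ioi 0) hβ fun _ hx _ _ hxy =>
      (mul_sub_le_sub_le_mul_sub_of_hasDerivAt (hW' ω) (hWbound ω) hx hxy).1

theorem measure_iUnion_band_lt_top [MeasurableSpace Ω] [OpensMeasurableSpace Ω] (μ : Measure Ω)
    [IsProbabilityMeasure μ] (hWc : ContinuousOn W (univ ×ˢ Ioi (0 : ℝ)))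
    (hW' : ∀ (ω : Ω) (r : ℝ), 0 < r → HasDerivAt (fun s => W (ω, s)) (W' (ω, r)) r)
    (hWbound : ∀ (ω : Ω) (r : ℝ), 0 < r → β ≤ W' (ω, r) ∧ W' (ω, r) ≤ δ) (hβ : 0 < β)
    {c ε : ℕ → ℝ} (hε : ∀ j, 0 ≤ ε j) (hεsum : Summable ε) :
    μ.prod volume (⋃ j, band W (c j) (ε j)) < ⊤ := by
  have hsum : Summable fun j => 2 * ε j / β := (hεsum.mul_left 2).div_const β
  calc μ.prod volume (⋃ j, band W (c j) (ε j))
      ≤ ∑' j, ENNReal.ofReal (2 * ε j / β) :=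
        (measure_iUnion_le _).trans <| ENNReal.tsum_le_tsum fun j =>
          measure_band_le μ hWc hW' hWbound hβ (c j) (ε j)
    _ = ENNReal.ofReal (∑' j, 2 * ε j / β) :=
        (ENNReal.ofReal_tsum_of_nonneg (fun j => by have := hε j; positivity) hsum).symm
    _ < ⊤ := ENNReal.ofReal_lt_top

theorem exists_affine_bounds [CompactSpace Ω] (hWc : ContinuousOn W (univ ×ˢ Ioi (0 : ℝ)))
    (hW' : ∀ (ω : Ω) (r : ℝ), 0 < r → HasDerivAt (fun s => W (ω, s)) (W' (ω, r)) r)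
    (hWbound : ∀ (ω : Ω) (r : ℝ), 0 < r → β ≤ W' (ω, r) ∧ W' (ω, r) ≤ δ) :
    ∃ C, ∀ (ω : Ω) (r : ℝ), 0 < r → β * r - C ≤ W (ω, r) ∧ W (ω, r) ≤ δ * r + C := by
  have hW1 : ContinuousOn (fun ω => W (ω, 1)) univ :=
    hWc.comp (continuous_id.prodMk continuous_const).continuousOn fun _ _ =>
      ⟨trivial, mem_Ioi.2 (one_pos (α := ℝ))⟩
  obtain ⟨B, hB⟩ := isCompact_univ.exists_bound_of_continuousOn hW1
  refine ⟨B + |β| + |δ|, fun ω r hr => ?_⟩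
  have hB := abs_le.1 (hB ω trivial)
  have hβδ : β * r ≤ δ * r :=
    mul_le_mul_of_nonneg_right ((hWbound ω r hr).1.trans (hWbound ω r hr).2) hr.le
  have hβabs : -|β| ≤ β ∧ β ≤ |β| := abs_le.1 le_rfl
  have hδabs : -|δ| ≤ δ ∧ δ ≤ |δ| := abs_le.1 le_rfl
  rcases le_total 1 r with h1r | hr1
  · have := mul_sub_le_sub_le_mul_sub_of_hasDerivAt (hW' ω) (hWbound ω) one_pos h1r
    constructor <;> nlinarith
  · have := mul_sub_le_sub_le_mul_sub_of_hasDerivAt (hW' ω) (hWbound ω) hr hr1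
    constructor <;> nlinarith

end Band

theorem exists_le_lt_succ {α : Type*} [LinearOrder α] {u : ℕ → α} {a : α} (h0 : u 0 ≤ a)
    {n : ℕ} (hn : a < u n) : ∃ m, u m ≤ a ∧ a < u (m + 1) := by
  induction n with
  | zero => exact absurd h0 hn.not_ge
  | succ n ih =>
    by_cases h : a < u n
    · exact ih h
    · exact ⟨n, not_lt.1 h, hn⟩

theorem exists_abs_sub_le_of_increment_le {u r ε c : ℕ → ℝ} {k : ℝ → ℝ} {β δ C M : ℝ}
    (hβ : 0 < β) (hδ : 0 < δ) (hr : ∀ n, 0 < r n) (hstep : ∀ n, u (n + 1) ≤ u n + k (r n))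
    (hbounds : ∀ n, β * r n - C ≤ u n ∧ u n ≤ δ * r n + C) (hunb : ∀ R, ∃ n, R < r n)
    (hkdec : AntitoneOn k (Ioi 0)) (hkM : ∀ s, 0 < s → k s ≤ M)
    (hε : ∀ j, 0 < ε j) (hε0 : Tendsto ε atTop (nhds 0)) (hc : Tendsto c atTop atTop)
    (hεk : Tendsto (fun j => k (c j / (4 * δ)) / ε j) atTop (nhds 0)) :
    ∃ K j, |u K - c j| ≤ ε j := by
  obtain ⟨j, hcj, hcjC, hcju, hεj, hkj⟩ : ∃ j, 0 < c j ∧ 4 / 3 * (1 + M + C) ≤ c j ∧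
      u 0 + 1 ≤ c j ∧ ε j ≤ 1 ∧ k (c j / (4 * δ)) / ε j < 2 :=
    ((hc.eventually_gt_atTop 0).and <| (hc.eventually_ge_atTop _).and <|
      (hc.eventually_ge_atTop _).and <| (hε0.eventually_le_const one_pos).and <|
        hεk.eventually_lt_const two_pos).exists
  have hk : k (c j / (4 * δ)) < 2 * ε j := (div_lt_iff₀ (hε j)).1 hkj
  obtain ⟨n, hn⟩ := hunb ((c j + C) / β)
  have hun : c j - ε j < u n := by
    rw [div_lt_iff₀' hβ] at hn
    linarith [(hbounds n).1, hε j]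
  obtain ⟨m, hm, hm1⟩ := exists_le_lt_succ (by linarith) hun
  have hrm : c j / (4 * δ) ≤ r m := by
    rw [div_le_iff₀ (by positivity)]
    linarith [hstep m, hkM (r m) (hr m), (hbounds m).2]
  have hkm : k (r m) ≤ k (c j / (4 * δ)) := hkdec (mem_Ioi.2 (by positivity)) (hr m) hrm
  exact ⟨m + 1, j, abs_le.2 ⟨by linarith, by linarith [hstep m]⟩⟩

theorem stmt_10_general {Ω : Type*} [TopologicalSpace Ω] [CompactSpace Ω]
    [MeasurableSpace Ω] [BorelSpace Ω]
    (μΩ : Measure Ω) [IsProbabilityMeasure μΩ]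
    (D : Set (Ω × ℝ)) (hDsub : D ⊆ Set.univ ×ˢ Set.Ioi (0 : ℝ))
    (f : Ω × ℝ → Ω × ℝ)
    (W : Ω × ℝ → ℝ) (hWc : ContinuousOn W (Set.univ ×ˢ Set.Ioi (0 : ℝ)))
    (W' : Ω × ℝ → ℝ) (β δ : ℝ) (hβ : 0 < β) (hδ : 0 < δ)
    (hW' : ∀ (ω : Ω) (r : ℝ), 0 < r → HasDerivAt (fun s => W (ω, s)) (W' (ω, r)) r)
    (hWbound : ∀ (ω : Ω) (r : ℝ), 0 < r → β ≤ W' (ω, r) ∧ W' (ω, r) ≤ δ)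
    (k : ℝ → ℝ) (hkdec : AntitoneOn k (Set.Ioi 0)) (hkbdd : ∃ M, ∀ r > (0 : ℝ), |k r| ≤ M)
    (hadiab : ∀ p ∈ D, W (f p) ≤ W p + k p.2)
    (ε Wj : ℕ → ℝ) (hε : ∀ j, 0 < ε j) (hεsum : Summable ε)
    (hWj : Tendsto Wj atTop atTop)
    (hεk : Tendsto (fun j => k (Wj j / (4 * δ)) / ε j) atTop (nhds 0)) :
    (μΩ.prod volume) (⋃ j, {p : Ω × ℝ | 0 < p.2 ∧ |W p - Wj j| ≤ ε j}) < ⊤ ∧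
    ∀ x : ℕ → Ω × ℝ, (∀ n, x n ∈ D ∧ x (n + 1) = f (x n)) →
      (∀ M : ℝ, ∀ N : ℕ, ∃ n, N ≤ n ∧ M < (x n).2) →
      ∃ K : ℕ, x K ∈ ⋃ j, {p : Ω × ℝ | 0 < p.2 ∧ |W p - Wj j| ≤ ε j} := by
  refine ⟨measure_iUnion_band_lt_top μΩ hWc hW' hWbound hβ (fun j => (hε j).le) hεsum,
    fun x hx hunb => ?_⟩
  obtain ⟨M, hM⟩ := hkbdd
  obtain ⟨C, hC⟩ := exists_affine_bounds hWc hW' hWbound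
  have hpos n : 0 < (x n).2 := (hDsub (hx n).1).2
  have hstep n : W (x (n + 1)) ≤ W (x n) + k (x n).2 := (hx n).2 ▸ hadiab _ (hx n).1
  obtain ⟨K, j, hKj⟩ := exists_abs_sub_le_of_increment_le (u := fun n => W (x n))
    hβ hδ hpos hstep (fun n => hC _ _ (hpos n)) (fun R => (hunb R 0).imp fun _ hn => hn.2) hkdec
    (fun s hs => (le_abs_self _).trans (hM s hs)) hε hεsum.tendsto_atTop_zero hWj hεk
  exact ⟨K, mem_iUnion.2 ⟨j, hpos K, hKj⟩⟩

/-- Finite-measure absorbing set: the set `A = ⋃_j {|W − W_j| ≤ ε_j}` has finite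
measure, and every forward orbit of the measure-preserving embedding `f` with
`limsup r_n = ∞` enters `A`. -/
theorem stmt_10 {Ω : Type*} [AddCommGroup Ω] [TopologicalSpace Ω] [IsTopologicalAddGroup Ω]
    [CompactSpace Ω] [TopologicalSpace.MetrizableSpace Ω]
    [MeasurableSpace Ω] [BorelSpace Ω]
    (μΩ : Measure Ω) [IsProbabilityMeasure μΩ]
    (hμΩinv : ∀ s : Set Ω, MeasurableSet s → ∀ ω : Ω, μΩ ((fun x => x + ω) ⁻¹' s) = μΩ s)
    (D : Set (Ω × ℝ)) (hDopen : IsOpen D) (hDsub : D ⊆ Set.univ ×ˢ Set.Ioi (0 : ℝ))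
    (f : Ω × ℝ → Ω × ℝ) (hfc : ContinuousOn f D) (hfinj : Set.InjOn f D)
    (hfmaps : Set.MapsTo f D (Set.univ ×ˢ Set.Ioi (0 : ℝ)))
    (hfpres : ∀ B ⊆ D, MeasurableSet B → (μΩ.prod volume) (f '' B) = (μΩ.prod volume) B)
    (W : Ω × ℝ → ℝ) (hWc : ContinuousOn W (Set.univ ×ˢ Set.Ioi (0 : ℝ)))
    (W' : Ω × ℝ → ℝ) (β δ : ℝ) (hβ : 0 < β) (hδ : 0 < δ)
    (hW' : ∀ (ω : Ω) (r : ℝ), 0 < r → HasDerivAt (fun s => W (ω, s)) (W' (ω, r)) r)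
    (hWbound : ∀ (ω : Ω) (r : ℝ), 0 < r → β ≤ W' (ω, r) ∧ W' (ω, r) ≤ δ)
    (k : ℝ → ℝ) (hkdec : AntitoneOn k (Set.Ioi 0)) (hkbdd : ∃ M, ∀ r > (0 : ℝ), |k r| ≤ M)
    (hk0 : Tendsto k atTop (nhds 0))
    (hadiab : ∀ p ∈ D, W (f p) ≤ W p + k p.2)
    (ε Wj : ℕ → ℝ) (hε : ∀ j, 0 < ε j) (hεsum : Summable ε)
    (hWj : Tendsto Wj atTop atTop)
    (hεk : Tendsto (fun j => k (Wj j / (4 * δ)) / ε j) atTop (nhds 0)) :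
    (μΩ.prod volume) (⋃ j, {p : Ω × ℝ | 0 < p.2 ∧ |W p - Wj j| ≤ ε j}) < ⊤ ∧
    ∀ x : ℕ → Ω × ℝ, (∀ n, x n ∈ D ∧ x (n + 1) = f (x n)) →
      (∀ M : ℝ, ∀ N : ℕ, ∃ n, N ≤ n ∧ M < (x n).2) →
      ∃ K : ℕ, x K ∈ ⋃ j, {p : Ω × ℝ | 0 < p.2 ∧ |W p - Wj j| ≤ ε j} :=
  stmt_10_general μΩ D hDsub f W hWc W' β δ hβ hδ hW' hWbound k hkdec hkbdd hadiab ε Wj hε hεsum hWj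
    hεk
end

section
/- (Well-posedness of the ping-pong map) Let p ∈ C²(ℝ) with 0 < a ≤ p(t) ≤ b and ‖p‖_{C²} < ∞, and let v* = 2·max{sup_t ṗ(t), 0}. Then for every (t_0, v_0) ∈ ℝ × (v*, ∞) the equation (t̃ − t_0)·v_0 = p(t̃) has a unique solution t̃ > t_0, and the map (t_0, v_0) ↦ t̃(t_0, v_0) is C¹ on ℝ × (v*, ∞); moreover v_1 = v_0 − 2ṗ(t̃) > 0. -/
/-!
For `v₀ > v*` the gap `g(s) = (s - t₀) v₀ - p(s)` has derivative `v₀ - ṗ(s) ≥ v₀ - v*/2 > 0`, so it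
is strictly increasing; since `g(t₀) = -p(t₀) < 0` and `g(t₀ + b/v₀) ≥ 0`, it has exactly one zero,
and that zero lies to the right of `t₀`. As `∂g/∂s ≠ 0` there, the implicit function theorem gives a
`C¹` local solution, which by uniqueness agrees with the impact time near every point.
-/

open Set Filter Topology

theorem isInvertible_fderiv_comp_inr_of_hasDerivAt {𝕜 : Type*} [NontriviallyNormedField 𝕜]
    {E : Type*} [NormedAddCommGroup E] [NormedSpace 𝕜 E] {f : E × 𝕜 → 𝕜} {u : E × 𝕜} {c : 𝕜}
    (hf : DifferentiableAt 𝕜 f u) (hc : HasDerivAt (fun y => f (u.1, y)) c u.2) (hc₀ : c ≠ 0) :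
    (fderiv 𝕜 f u ∘L .inr 𝕜 E 𝕜).IsInvertible := by
  have hpartial : HasFDerivAt (fun y => f (u.1, y)) (fderiv 𝕜 f u ∘L .inr 𝕜 E 𝕜) u.2 :=
    hf.hasFDerivAt.comp u.2 (hasFDerivAt_prodMk_right u.1 u.2)
  rw [hpartial.unique hc.hasFDerivAt]
  refine ⟨ContinuousLinearEquiv.unitsEquivAut 𝕜 (Units.mk0 c hc₀), ?_⟩
  ext
  simp

theorem ContDiffAt.contDiffAt_of_eventually_apply_eq_iff {𝕜 : Type*} [RCLike 𝕜]
    {E₁ : Type*} [NormedAddCommGroup E₁] [NormedSpace 𝕜 E₁] [CompleteSpace E₁]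
    {E₂ : Type*} [NormedAddCommGroup E₂] [NormedSpace 𝕜 E₂] [CompleteSpace E₂]
    {F : Type*} [NormedAddCommGroup F] [NormedSpace 𝕜 F] [CompleteSpace F]
    {n : WithTop ℕ∞} {f : E₁ × E₂ → F} {u : E₁ × E₂} {φ : E₁ → E₂}
    (hf : ContDiffAt 𝕜 n f u) (hn : n ≠ 0) (hf₂ : (fderiv 𝕜 f u ∘L .inr 𝕜 E₁ E₂).IsInvertible)
    (hφ : ∀ᶠ x in 𝓝 u.1, ∀ y, f (x, y) = f u ↔ y = φ x) :
    ContDiffAt 𝕜 n φ u.1 := by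
  refine (hf.contDiffAt_implicitFunction hn hf₂).congr_of_eventuallyEq ?_
  filter_upwards [hf.eventually_apply_implicitFunction hn hf₂, hφ] with x hx hxφ
  exact ((hxφ _).1 hx).symm

/-- The paper's `g(t̃) = (t̃ - t₀) v₀ - p(t̃)`: its zeros are the impact times with the moving wall. -/
def impactGap (p : ℝ → ℝ) (t₀ v₀ s : ℝ) : ℝ := (s - t₀) * v₀ - p s

section ImpactGap

variable {p : ℝ → ℝ} {t₀ v₀ : ℝ}

theorem hasDerivAt_impactGap {s : ℝ} (hp : DifferentiableAt ℝ p s) :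
    HasDerivAt (impactGap p t₀ v₀) (v₀ - deriv p s) s := by
  have h := (((hasDerivAt_id' s).sub_const t₀).mul_const v₀).sub hp.hasDerivAt
  rwa [one_mul] at h

theorem strictMono_impactGap (hp : Differentiable ℝ p) (hv₀ : ∀ s, deriv p s < v₀) :
    StrictMono (impactGap p t₀ v₀) :=
  strictMono_of_deriv_pos fun s => by
    rw [(hasDerivAt_impactGap (hp s)).deriv]
    exact sub_pos.2 (hv₀ s)

theorem exists_lt_impactGap_eq_zero {b : ℝ} (hp : Continuous p) (hpt₀ : 0 < p t₀)
    (hpb : ∀ t, p t ≤ b) (hv₀ : 0 < v₀) : ∃ s, t₀ < s ∧ impactGap p t₀ v₀ s = 0 := by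
  have hT : t₀ ≤ t₀ + b / v₀ :=
    le_add_of_nonneg_right (div_nonneg (hpt₀.le.trans (hpb t₀)) hv₀.le)
  have hg_cont : Continuous (impactGap p t₀ v₀) := by unfold impactGap; fun_prop
  have hg_start : impactGap p t₀ v₀ t₀ < 0 := by simp [impactGap, hpt₀]
  have hg_end : 0 ≤ impactGap p t₀ v₀ (t₀ + b / v₀) := by
    simp only [impactGap, add_sub_cancel_left, div_mul_cancel₀ b hv₀.ne', sub_nonneg, hpb]
  obtain ⟨s, ⟨hs₀, -⟩, hs⟩ :=
    intermediate_value_Icc hT hg_cont.continuousOn ⟨hg_start.le, hg_end⟩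
  refine ⟨s, lt_of_le_of_ne hs₀ ?_, hs⟩
  rintro rfl
  exact hg_start.ne hs

theorem ContDiff.impactGap_uncurry {n : WithTop ℕ∞} (hp : ContDiff ℝ n p) :
    ContDiff ℝ n fun x : (ℝ × ℝ) × ℝ => impactGap p x.1.1 x.1.2 x.2 := by
  unfold impactGap; fun_prop

theorem contDiffOn_of_impactGap_eq_zero_iff {n : WithTop ℕ∞} {U : Set (ℝ × ℝ)}
    {tt : ℝ × ℝ → ℝ} (hp : ContDiff ℝ n p) (hn : n ≠ 0) (hU : IsOpen U)
    (htt : ∀ q ∈ U, ∀ s, impactGap p q.1 q.2 s = 0 ↔ s = tt q)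
    (hderiv : ∀ q ∈ U, deriv p (tt q) ≠ q.2) :
    ContDiffOn ℝ n tt U := by
  intro q hq
  have hgap := hp.impactGap_uncurry
  have hroot : impactGap p q.1 q.2 (tt q) = 0 := (htt q hq _).2 rfl
  refine ContDiffAt.contDiffWithinAt <|
    hgap.contDiffAt.contDiffAt_of_eventually_apply_eq_iff (u := (q, tt q)) hn
      (isInvertible_fderiv_comp_inr_of_hasDerivAt (hgap.differentiable hn _)
        (hasDerivAt_impactGap (t₀ := q.1) (v₀ := q.2) (hp.differentiable hn (tt q)))
        (sub_ne_zero.2 (hderiv q hq).symm)) ?_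
  filter_upwards [hU.mem_nhds hq] with x hx y
  rw [hroot]
  exact htt x hx y

end ImpactGap

/-- Well-posedness of the ping-pong map: for `v₀ > v*` the impact equation
`(t̃ − t₀)v₀ = p(t̃)` has a unique solution `t̃ > t₀`, depending `C¹` on
`(t₀, v₀)`, and the reflected velocity `v₁ = v₀ − 2ṗ(t̃)` is positive. -/
theorem stmt_15 (p : ℝ → ℝ) (hp : ContDiff ℝ 2 p)
    (a b : ℝ) (ha : 0 < a) (hpb : ∀ t : ℝ, a ≤ p t ∧ p t ≤ b)
    (M : ℝ) (hM : ∀ t : ℝ, |deriv p t| ≤ M ∧ |deriv (deriv p) t| ≤ M)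
    (vstar : ℝ) (hv : vstar = 2 * max (⨆ t : ℝ, deriv p t) 0) :
    ∃ tt : ℝ × ℝ → ℝ,
      ContDiffOn ℝ 1 tt (Set.univ ×ˢ Set.Ioi vstar) ∧
      ∀ t0 v0 : ℝ, vstar < v0 →
        (t0 < tt (t0, v0) ∧ (tt (t0, v0) - t0) * v0 = p (tt (t0, v0))) ∧
        (∀ s : ℝ, t0 < s → (s - t0) * v0 = p s → s = tt (t0, v0)) ∧
        0 < v0 - 2 * deriv p (tt (t0, v0)) := by
  have hp₁ : ContDiff ℝ 1 p := hp.of_le (by norm_num)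
  have hvstar : 0 ≤ vstar := by rw [hv]; positivity
  have hderiv : ∀ t, 2 * deriv p t ≤ vstar := fun t => by
    have hbdd : BddAbove (range (deriv p)) :=
      ⟨M, by rintro _ ⟨s, rfl⟩; exact (abs_le.1 (hM s).1).2⟩
    rw [hv]
    gcongr
    exact (le_ciSup hbdd t).trans (le_max_left _ _)
  have hslow : ∀ v₀, vstar < v₀ → ∀ t, deriv p t < v₀ := fun v₀ hv₀ t => by
    linarith [hderiv t]
  have hmono : ∀ q : ℝ × ℝ, vstar < q.2 → StrictMono (impactGap p q.1 q.2) := fun q hq =>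
    strictMono_impactGap (hp₁.differentiable one_ne_zero) (hslow q.2 hq)
  have hroot : ∀ q : ℝ × ℝ, vstar < q.2 → ∃ s, q.1 < s ∧ impactGap p q.1 q.2 s = 0 :=
    fun q hq => exists_lt_impactGap_eq_zero hp.continuous (ha.trans_le (hpb q.1).1)
      (fun t => (hpb t).2) (hvstar.trans_lt hq)
  choose! tt htt_gt htt_root using hroot
  have hzero_iff : ∀ q : ℝ × ℝ, vstar < q.2 → ∀ s, impactGap p q.1 q.2 s = 0 ↔ s = tt q :=
    fun q hq s => ⟨fun hs => (hmono q hq).injective (hs.trans (htt_root q hq).symm),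
      fun hs => hs ▸ htt_root q hq⟩
  refine ⟨tt, contDiffOn_of_impactGap_eq_zero_iff hp₁ one_ne_zero
    (isOpen_univ.prod isOpen_Ioi) (fun q hq => hzero_iff q hq.2)
    (fun q hq => (hslow q.2 hq.2 (tt q)).ne), fun t₀ v₀ hv₀ => ?_⟩
  refine ⟨⟨htt_gt (t₀, v₀) hv₀, sub_eq_zero.1 (htt_root (t₀, v₀) hv₀)⟩,
    fun s _ hs => (hzero_iff _ hv₀ s).1 (sub_eq_zero.2 hs), ?_⟩
  linarith [hderiv (tt (t₀, v₀))]
end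

section
/- (Non-injectivity of the ping-pong map) Suppose p ∈ C²(ℝ) is bounded with bounded derivatives, 0 < a ≤ p ≤ b, and there exist t̃_1 < t̃_2 at which ṗ attains its supremum, with p(t̃_1) > p(t̃_2). Then the ping-pong map (t_0, v_0) ↦ (t_1, v_1) defined by t_1 = t̃ + p(t̃)/v_1, v_1 = v_0 − 2ṗ(t̃), with t̃ the solution of (t̃ − t_0)v_0 = p(t̃), fails to be injective on its domain ℝ × (v*, ∞): there exist t_{0,1} < t_{0,2} and v_0 > v* with identical images. -/
/-!
With `S = sup ṗ = ṗ(t̃₁) = ṗ(t̃₂)`, the outgoing speed `v₀ - 2ṗ(t̃ᵢ) = v₀ - 2S` is the same for both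
collisions, so it suffices to pick it so that the two exit times agree: `v₁` is the slope of the
chord, `v₁ = (p(t̃₁) - p(t̃₂)) / (t̃₂ - t̃₁) > 0`. Then `v₀ = v₁ + 2S` exceeds `v* = 2 max S 0`
because `S ≥ 0`: a function bounded below cannot have derivative `≤ S < 0` everywhere.
-/

open Set

theorem not_bddBelow_range_of_deriv_le {f : ℝ → ℝ} (hf : Differentiable ℝ f) {C : ℝ}
    (hC : C < 0) (hfC : ∀ t, deriv f t ≤ C) : ¬BddBelow (range f) := by
  rintro ⟨m, hm⟩
  set y := (m - f 0) / C + 1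
  have hm0 : m ≤ f 0 := hm ⟨0, rfl⟩
  have hy : 0 ≤ y := by
    have : 0 ≤ (m - f 0) / C := div_nonneg_of_nonpos (by linarith) hC.le
    linarith
  have hCy : C * y = m - f 0 + C := by
    simp only [y, mul_add, mul_one, mul_div_cancel₀ _ hC.ne]
  have hfy := image_sub_le_mul_sub_of_deriv_le hf hfC hy
  have : m ≤ f y := hm ⟨y, rfl⟩
  linarith

/-- In the unbounded case the supremum is `0` by Mathlib's convention. -/
theorem iSup_deriv_nonneg_of_bddBelow {f : ℝ → ℝ} (hf : Differentiable ℝ f)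
    (hb : BddBelow (range f)) : 0 ≤ ⨆ t, deriv f t := by
  by_cases hbdd : BddAbove (range (deriv f))
  · by_contra! hneg
    exact not_bddBelow_range_of_deriv_le hf hneg (fun t => le_ciSup hbdd t) hb
  · rw [Real.iSup_of_not_bddAbove hbdd]

theorem add_div_slope_eq_add_div_slope {s₁ s₂ q₁ q₂ : ℝ} (hs : s₁ ≠ s₂) (hq : q₁ ≠ q₂) :
    s₁ + q₁ / ((q₁ - q₂) / (s₂ - s₁)) = s₂ + q₂ / ((q₁ - q₂) / (s₂ - s₁)) := by
  have hs' : s₂ - s₁ ≠ 0 := sub_ne_zero.2 hs.symm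
  have hq' : q₁ - q₂ ≠ 0 := sub_ne_zero.2 hq
  field_simp
  ring

theorem stmt_16_general (p : ℝ → ℝ) (hp : ContDiff ℝ 2 p)
    (a b : ℝ) (ha : 0 < a) (hpb : ∀ t : ℝ, a ≤ p t ∧ p t ≤ b)
    (vstar : ℝ) (hv : vstar = 2 * max (⨆ t : ℝ, deriv p t) 0)
    (tt1 tt2 : ℝ) (h12 : tt1 < tt2)
    (hmax1 : deriv p tt1 = ⨆ t : ℝ, deriv p t)
    (hmax2 : deriv p tt2 = ⨆ t : ℝ, deriv p t)
    (hpp : p tt2 < p tt1) :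
    ∃ t01 t02 v0 s1 s2 : ℝ, t01 < t02 ∧ vstar < v0 ∧
      t01 < s1 ∧ (s1 - t01) * v0 = p s1 ∧
      t02 < s2 ∧ (s2 - t02) * v0 = p s2 ∧
      v0 - 2 * deriv p s1 = v0 - 2 * deriv p s2 ∧
      s1 + p s1 / (v0 - 2 * deriv p s1) = s2 + p s2 / (v0 - 2 * deriv p s2) := by
  set S := ⨆ t : ℝ, deriv p t
  have hS : 0 ≤ S := iSup_deriv_nonneg_of_bddBelow (hp.differentiable (by norm_num))
    ⟨a, by rintro _ ⟨t, rfl⟩; exact (hpb t).1⟩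
  set v1 := (p tt1 - p tt2) / (tt2 - tt1)
  have hv1 : 0 < v1 := div_pos (sub_pos.2 hpp) (sub_pos.2 h12)
  set v0 := v1 + 2 * S
  have hv0 : 0 < v0 := by positivity
  have hexit : v0 - 2 * S = v1 := by ring
  have hpos : ∀ t, 0 < p t / v0 := fun t => div_pos (ha.trans_le (hpb t).1) hv0
  refine ⟨tt1 - p tt1 / v0, tt2 - p tt2 / v0, v0, tt1, tt2, ?_, ?_, sub_lt_self _ (hpos tt1),
    by field_simp; ring, sub_lt_self _ (hpos tt2), by field_simp; ring, by rw [hmax1, hmax2], ?_⟩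
  · have : p tt2 / v0 < p tt1 / v0 := div_lt_div_of_pos_right hpp hv0
    linarith
  · rw [hv, max_eq_left hS]
    linarith
  · rw [hmax1, hmax2, hexit]
    exact add_div_slope_eq_add_div_slope h12.ne hpp.ne'

/-- Non-injectivity of the ping-pong map: if `ṗ` attains its supremum at two
times `t̃₁ < t̃₂` with `p(t̃₁) > p(t̃₂)`, then the ping-pong map is not injective
on `ℝ × (v*, ∞)`: two distinct initial conditions have identical images. -/
theorem stmt_16 (p : ℝ → ℝ) (hp : ContDiff ℝ 2 p)
    (a b : ℝ) (ha : 0 < a) (hpb : ∀ t : ℝ, a ≤ p t ∧ p t ≤ b)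
    (M : ℝ) (hM : ∀ t : ℝ, |deriv p t| ≤ M ∧ |deriv (deriv p) t| ≤ M)
    (vstar : ℝ) (hv : vstar = 2 * max (⨆ t : ℝ, deriv p t) 0)
    (tt1 tt2 : ℝ) (h12 : tt1 < tt2)
    (hmax1 : deriv p tt1 = ⨆ t : ℝ, deriv p t)
    (hmax2 : deriv p tt2 = ⨆ t : ℝ, deriv p t)
    (hpp : p tt2 < p tt1) :
    ∃ t01 t02 v0 s1 s2 : ℝ, t01 < t02 ∧ vstar < v0 ∧
      t01 < s1 ∧ (s1 - t01) * v0 = p s1 ∧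
      t02 < s2 ∧ (s2 - t02) * v0 = p s2 ∧
      v0 - 2 * deriv p s1 = v0 - 2 * deriv p s2 ∧
      s1 + p s1 / (v0 - 2 * deriv p s1) = s2 + p s2 / (v0 - 2 * deriv p s2) :=
  stmt_16_general p hp a b ha hpb vstar hv tt1 tt2 h12 hmax1 hmax2 hpp
end

section
/- (Solvability of the flow-impact equation) Let Ω, ψ be as above and P ∈ C¹_ψ(Ω) with a ≤ P ≤ b, and let v* = 2·max{max_Ω ∂_ψ P, 0}. Then for every (ω_0, E_0) ∈ Ω × (v*²/2, ∞) the equation τ = (2E_0)^{−1/2} · P(ω_0 + ψ(τ)) has a unique solution τ = τ(ω_0, E_0) > 0, and τ is continuous on Ω × (v*²/2, ∞). -/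
/-!
Write `c = (2E₀)^{-1/2}` and `g(t) = t - c P(ω₀ + ψ t)`. Since `∂_ψ P ≤ v*/2 < √(2E₀)/2`, the
derivative `g'(t) = 1 - c ∂_ψ P(ω₀ + ψ t)` is positive, so `g` is strictly increasing; as
`g 0 < 0 ≤ g (c b)`, it has exactly one zero, which is positive because it equals
`c P(⋯) ≥ c a > 0`. Continuity in `(ω₀, E₀)` holds for zeros of any family of strictly increasing
functions depending continuously on a parameter: if `g(s) < 0 < g(s')` at the base point, the
same signs persist nearby, trapping the zero between `s` and `s'`.
-/

open Filter Topology Set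

theorem hasDerivAt_flow_of_forall_hasDerivAt_zero {Ω : Type*} [AddMonoid Ω] {ψ : ℝ →+ Ω}
    {P Pψ : Ω → ℝ} (h : ∀ ω, HasDerivAt (fun t => P (ω + ψ t)) (Pψ ω) 0) (ω : Ω) (s : ℝ) :
    HasDerivAt (fun t => P (ω + ψ t)) (Pψ (ω + ψ s)) s := by
  have := HasDerivAt.comp_sub_const s s (by rw [sub_self]; exact h (ω + ψ s))
  simpa only [add_assoc, ← map_add, add_sub_cancel] using this

theorem strictMono_sub_const_mul {f f' : ℝ → ℝ} {c M : ℝ} (hf : ∀ s, HasDerivAt f (f' s) s)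
    (hf' : ∀ s, f' s ≤ M) (hc : 0 ≤ c) (hcM : c * M < 1) : StrictMono fun t => t - c * f t :=
  strictMono_of_hasDerivAt_pos (fun s => (hasDerivAt_id s).sub ((hf s).const_mul c))
    fun s => by linarith [mul_le_mul_of_nonneg_left (hf' s) hc]

theorem exists_pos_eq_const_mul_unique {f : ℝ → ℝ} {a b c : ℝ} (hf : Continuous f) (ha : 0 < a)
    (hfab : ∀ t, a ≤ f t ∧ f t ≤ b) (hc : 0 < c) (hmono : StrictMono fun t => t - c * f t) :
    ∃ t, 0 < t ∧ t = c * f t ∧ ∀ t', t' = c * f t' → t' = t := by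
  set g : ℝ → ℝ := fun t => t - c * f t
  have hg0 : g 0 ≤ 0 := by
    simp only [g]; nlinarith [(hfab 0).1]
  have hgcb : 0 ≤ g (c * b) := by
    simp only [g]; nlinarith [(hfab (c * b)).2]
  have hcb : 0 ≤ c * b := by nlinarith [hfab 0]
  obtain ⟨t, -, hgt⟩ := intermediate_value_Icc hcb (by fun_prop : Continuous g).continuousOn
    ⟨hg0, hgcb⟩
  have hfix : t = c * f t := sub_eq_zero.mp hgt
  refine ⟨t, ?_, hfix, fun t' ht' => hmono.injective ?_⟩
  · rw [hfix]; nlinarith [(hfab t).1]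
  · exact (sub_eq_zero.mpr ht').trans hgt.symm

theorem continuousAt_of_strictMono_of_eq_zero {X : Type*} [TopologicalSpace X]
    {F : ℝ → X → ℝ} {τ : X → ℝ} {x₀ : X} (hF : ∀ t, ContinuousAt (F t) x₀)
    (hmono : ∀ᶠ x in 𝓝 x₀, StrictMono (F · x)) (hzero : ∀ᶠ x in 𝓝 x₀, F (τ x) x = 0) :
    ContinuousAt τ x₀ := by
  have hmono₀ := hmono.self_of_nhds
  have hzero₀ := hzero.self_of_nhds
  refine tendsto_order.2 ⟨fun s hs => ?_, fun s hs => ?_⟩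
  · have hneg : F s x₀ < 0 := hzero₀ ▸ hmono₀ hs
    filter_upwards [hmono, hzero, hF s (Iio_mem_nhds hneg)] with x hm hz hx
    exact hm.lt_iff_lt.mp (hz.symm ▸ hx)
  · have hpos : 0 < F s x₀ := hzero₀ ▸ hmono₀ hs
    filter_upwards [hmono, hzero, hF s (Ioi_mem_nhds hpos)] with x hm hz hx
    exact hm.lt_iff_lt.mp (hz.symm ▸ hx)

theorem inv_sqrt_two_mul_mul_lt_one {M E : ℝ} (hM : 0 ≤ M) (hE : (2 * M) ^ 2 / 2 < E) :
    (√(2 * E))⁻¹ * M < 1 := by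
  have hlt : 2 * M < √(2 * E) := (Real.lt_sqrt (by positivity)).2 (by linarith)
  rw [inv_mul_lt_iff₀ (by linarith)]
  linarith

theorem stmt_18_general {Ω : Type*} [AddCommGroup Ω] [TopologicalSpace Ω] [IsTopologicalAddGroup Ω]
    [CompactSpace Ω]
    (ψ : ℝ →+ Ω) (hψ : Continuous ψ)
    (P Pψ : Ω → ℝ) (hP : Continuous P) (hPψc : Continuous Pψ)
    (hPψ : ∀ ω : Ω, HasDerivAt (fun t : ℝ => P (ω + ψ t)) (Pψ ω) 0)
    (a b : ℝ) (ha : 0 < a) (hPb : ∀ ω : Ω, a ≤ P ω ∧ P ω ≤ b)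
    (vstar : ℝ) (hv : vstar = 2 * max (⨆ ω : Ω, Pψ ω) 0) :
    ∃ τ : Ω × ℝ → ℝ,
      ContinuousOn τ (Set.univ ×ˢ Set.Ioi (vstar ^ 2 / 2)) ∧
      ∀ (ω0 : Ω) (E0 : ℝ), vstar ^ 2 / 2 < E0 →
        0 < τ (ω0, E0) ∧
        τ (ω0, E0) = (Real.sqrt (2 * E0))⁻¹ * P (ω0 + ψ (τ (ω0, E0))) ∧
        ∀ t : ℝ, t = (Real.sqrt (2 * E0))⁻¹ * P (ω0 + ψ t) → t = τ (ω0, E0) := by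
  set M := max (⨆ ω : Ω, Pψ ω) 0
  have hPψM (ω : Ω) : Pψ ω ≤ M :=
    (le_ciSup (isCompact_range hPψc).bddAbove ω).trans (le_max_left _ _)
  have hsqrt {E : ℝ} (hE : vstar ^ 2 / 2 < E) : 0 < √(2 * E) :=
    Real.sqrt_pos.2 (by linarith [sq_nonneg vstar])
  have hmono (ω : Ω) {E : ℝ} (hE : vstar ^ 2 / 2 < E) :
      StrictMono fun t => t - (√(2 * E))⁻¹ * P (ω + ψ t) :=
    strictMono_sub_const_mul (hasDerivAt_flow_of_forall_hasDerivAt_zero hPψ ω) (fun _ => hPψM _)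
      (inv_pos.2 (hsqrt hE)).le (inv_sqrt_two_mul_mul_lt_one (le_max_right _ _) (hv ▸ hE))
  have hsol (q : Ω × ℝ) : ∃ t, vstar ^ 2 / 2 < q.2 → 0 < t ∧ t = (√(2 * q.2))⁻¹ * P (q.1 + ψ t) ∧
      ∀ t', t' = (√(2 * q.2))⁻¹ * P (q.1 + ψ t') → t' = t := by
    by_cases hE : vstar ^ 2 / 2 < q.2
    · obtain ⟨t, ht⟩ := exists_pos_eq_const_mul_unique (hP.comp (continuous_const.add hψ)) ha
        (fun _ => hPb _) (inv_pos.2 (hsqrt hE)) (hmono q.1 hE)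
      exact ⟨t, fun _ => ht⟩
    · exact ⟨0, fun h => absurd h hE⟩
  choose τ hτ using hsol
  refine ⟨τ, continuousOn_of_forall_continuousAt fun q hq => ?_, fun ω E hE => hτ (ω, E) hE⟩
  have hU : ∀ᶠ q in 𝓝 q, q ∈ univ ×ˢ Ioi (vstar ^ 2 / 2) :=
    (isOpen_univ.prod isOpen_Ioi).mem_nhds hq
  refine continuousAt_of_strictMono_of_eq_zero
    (F := fun t q => t - (√(2 * q.2))⁻¹ * P (q.1 + ψ t)) (fun t => ?_) ?_ ?_
  · have := (hsqrt hq.2).ne'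
    fun_prop (disch := assumption)
  · filter_upwards [hU] with q hq using hmono q.1 hq.2
  · filter_upwards [hU] with q hq using sub_eq_zero.mpr (hτ q hq.2).2.1

/-- Solvability of the flow-impact equation: for `E₀ > v*²/2` the equation
`τ = (2E₀)^{-1/2}·P(ω₀ + ψ τ)` has a unique solution `τ(ω₀,E₀) > 0`,
continuous on `Ω × (v*²/2, ∞)`. -/
theorem stmt_18 {Ω : Type*} [AddCommGroup Ω] [TopologicalSpace Ω] [IsTopologicalAddGroup Ω]
    [CompactSpace Ω] [TopologicalSpace.MetrizableSpace Ω]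
    (ψ : ℝ →+ Ω) (hψ : Continuous ψ) (hd : DenseRange ψ)
    (P Pψ : Ω → ℝ) (hP : Continuous P) (hPψc : Continuous Pψ)
    (hPψ : ∀ ω : Ω, HasDerivAt (fun t : ℝ => P (ω + ψ t)) (Pψ ω) 0)
    (a b : ℝ) (ha : 0 < a) (hPb : ∀ ω : Ω, a ≤ P ω ∧ P ω ≤ b)
    (vstar : ℝ) (hv : vstar = 2 * max (⨆ ω : Ω, Pψ ω) 0) :
    ∃ τ : Ω × ℝ → ℝ,
      ContinuousOn τ (Set.univ ×ˢ Set.Ioi (vstar ^ 2 / 2)) ∧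
      ∀ (ω0 : Ω) (E0 : ℝ), vstar ^ 2 / 2 < E0 →
        0 < τ (ω0, E0) ∧
        τ (ω0, E0) = (Real.sqrt (2 * E0))⁻¹ * P (ω0 + ψ (τ (ω0, E0))) ∧
        ∀ t : ℝ, t = (Real.sqrt (2 * E0))⁻¹ * P (ω0 + ψ t) → t = τ (ω0, E0) :=
  stmt_18_general ψ hψ P Pψ hP hPψc hPψ a b ha hPb vstar hv
end
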